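/- Let n = 1, m > 0 and 1/2 < θ ≤ 1. Then there exist positive constants C₁, C₂ and t₀ > 0 such that for all t ≥ t₀ and all P₁ ∈ ℝ, (C₁/(1+m²)^{1/(2θ)}) P₁² t^{(2θ−1)/θ} ≤ ∫_{|ξ| ≤ 1} |φ(t,ξ)|² dξ ≤ (C₂/m²) (1/(2θ−1)) P₁² t^{(2θ−1)/θ}. -/

import Mathlib

/-!
Write `A(r) = r² + m² log(1 + r^{2θ})`, so that the integrand is `P₁² e^{-r²t} sin²(t√A) / A`;
by evenness the integral is twice the integral over `[0, 1]`. Near the origin `A ≍ r^{2θ}`, so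
the relevant scale is `r ≍ t^{-1/θ}`. For the upper bound, `sin² x ≤ x²` bounds the integrand by
`P₁² t²` below that scale, and `sin² ≤ 1`, `A ≥ m² r^{2θ} / 2` bound it by `2P₁² r^{-2θ} / m²`
above it, whose integral is `≲ t^{(2θ-1)/θ} / (2θ - 1)` because `2θ > 1`. For the lower bound,
on `r ≤ ((1 + m²) t²)^{-1/(2θ)}` both `t√A ≤ 1` and `r²t ≤ 1`, so Jordan's inequality
`sin x ≥ 2x/π` makes the integrand `≳ P₁² t²` on an interval of that length.
-/

open MeasureTheory Real

noncomputable section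

/-- Euclidean space `ℝⁿ`. -/
abbrev E (n : ℕ) := EuclideanSpace ℝ (Fin n)

/-- The asymptotic profile `φ(t,ξ)`, as a function of `r = |ξ|`. -/
def phi (m θ P₁ t r : ℝ) : ℝ :=
  P₁ * Real.exp (-(r ^ 2) * t / 2) *
    Real.sin (t * Real.sqrt (r ^ 2 + m ^ 2 * Real.log (1 + r ^ (2 * θ)))) /
    Real.sqrt (r ^ 2 + m ^ 2 * Real.log (1 + r ^ (2 * θ)))

open Set

lemma sq_sin_mul_sqrt_div_sqrt_le_sq (t A : ℝ) : (sin (t * √A) / √A) ^ 2 ≤ t ^ 2 := by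
  refine sq_le_sq.mpr ?_
  rw [abs_div, abs_of_nonneg (sqrt_nonneg A)]
  refine div_le_of_le_mul₀ (sqrt_nonneg A) (abs_nonneg t) ?_
  simpa [abs_mul, abs_of_nonneg (sqrt_nonneg A)] using abs_sin_le_abs (x := t * √A)

lemma sq_sin_mul_sqrt_div_sqrt_le_inv (t : ℝ) {A : ℝ} (hA : 0 ≤ A) :
    (sin (t * √A) / √A) ^ 2 ≤ A⁻¹ := by
  rw [div_pow, sq_sqrt hA, ← one_div]
  exact div_le_div_of_nonneg_right (sin_sq_le_one _) hA

lemma sq_two_div_pi_mul_le_sq_sin_mul_sqrt_div_sqrt {t A : ℝ} (ht : 0 ≤ t) (hA : 0 < A)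
    (htA : t ^ 2 * A ≤ 1) : (2 / π * t) ^ 2 ≤ (sin (t * √A) / √A) ^ 2 := by
  have hsA : 0 < √A := sqrt_pos.mpr hA
  have hy : t * √A ≤ 1 := by
    nlinarith [sq_sqrt hA.le, mul_nonneg ht hsA.le]
  have hsin : 2 / π * (t * √A) ≤ sin (t * √A) :=
    mul_le_sin (by positivity) (hy.trans (by linarith [pi_gt_three]))
  rw [show 2 / π * t = 2 / π * (t * √A) / √A by field_simp]
  gcongr

lemma measurable_phi (m θ P₁ t : ℝ) : Measurable (phi m θ P₁ t) := by
  unfold phi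
  fun_prop

lemma setIntegral_abs_le_eq_two_mul (f : ℝ → ℝ) (a : ℝ) :
    ∫ ξ in {ξ : ℝ | |ξ| ≤ a}, f |ξ| = 2 * ∫ r in Ioc 0 a, f r := by
  have hind : {ξ : ℝ | |ξ| ≤ a}.indicator (fun ξ => f |ξ|) =
      fun ξ => (Iic a).indicator f |ξ| := by
    ext ξ; simp [indicator]
  rw [← integral_indicator (measurableSet_le continuous_abs.measurable measurable_const), hind,
    integral_comp_abs, integral_indicator measurableSet_Iic,
    Measure.restrict_restrict measurableSet_Iic, Iic_inter_Ioi]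

lemma integral_rpow_neg_le {s a : ℝ} (hs : 1 < s) (ha : 0 < a) (ha1 : a ≤ 1) :
    ∫ x in a..1, x ^ (-s) ≤ a ^ (1 - s) / (s - 1) := by
  have h0 : (0 : ℝ) ∉ uIcc a 1 := by
    rw [uIcc_of_le ha1]; exact fun h => ha.not_ge h.1
  rw [integral_rpow (Or.inr ⟨by linarith, h0⟩), one_rpow, neg_add_eq_sub, ← neg_sub s 1,
    div_neg, ← neg_div, neg_sub]
  exact div_le_div_of_nonneg_right (by linarith) (by linarith)

def symbol (m θ r : ℝ) : ℝ := r ^ 2 + m ^ 2 * log (1 + r ^ (2 * θ))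

lemma phi_sq_eq (m θ P₁ t r : ℝ) :
    phi m θ P₁ t r ^ 2 =
      P₁ ^ 2 * exp (-(r ^ 2 * t)) * (sin (t * √(symbol m θ r)) / √(symbol m θ r)) ^ 2 := by
  rw [phi, ← symbol, mul_div_assoc, mul_pow, mul_pow, ← exp_nat_mul]
  ring_nf

section symbol

variable {θ r : ℝ} (m : ℝ)

lemma sq_le_symbol (hr : 0 ≤ r) : r ^ 2 ≤ symbol m θ r := by
  have : 0 ≤ log (1 + r ^ (2 * θ)) := log_nonneg (by linarith [rpow_nonneg hr (2 * θ)])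
  unfold symbol
  nlinarith [sq_nonneg m]

lemma symbol_le (hθ : θ ≤ 1) (hr : 0 < r) (hr1 : r ≤ 1) :
    symbol m θ r ≤ (1 + m ^ 2) * r ^ (2 * θ) := by
  have hsq : r ^ 2 ≤ r ^ (2 * θ) := by
    simpa using rpow_le_rpow_of_exponent_ge hr hr1 (by linarith : 2 * θ ≤ 2)
  have hlog : log (1 + r ^ (2 * θ)) ≤ r ^ (2 * θ) := by
    linarith [log_le_sub_one_of_pos (by positivity : 0 < 1 + r ^ (2 * θ))]
  unfold symbol
  nlinarith [sq_nonneg m]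

lemma mul_rpow_le_two_mul_symbol (hθ : 0 ≤ θ) (hr : 0 ≤ r) (hr1 : r ≤ 1) :
    m ^ 2 * r ^ (2 * θ) ≤ 2 * symbol m θ r := by
  set x := r ^ (2 * θ)
  have hx : 0 ≤ x := rpow_nonneg hr _
  have hx1 : x ≤ 1 := rpow_le_one hr hr1 (by linarith)
  -- `log (1 + x) ≥ 2x / (x + 2) ≥ x / 2` on `[0, 1]`
  have hlog : x ≤ 2 * log (1 + x) := by
    have h := le_log_one_add_of_nonneg hx
    rw [div_le_iff₀ (by linarith)] at h
    nlinarith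
  unfold symbol
  nlinarith [sq_nonneg m, sq_nonneg r]

end symbol

section pointwise

variable {m θ P₁ t r : ℝ}

lemma phi_sq_le_sq_mul_sq (ht : 0 ≤ t) : phi m θ P₁ t r ^ 2 ≤ P₁ ^ 2 * t ^ 2 := by
  rw [phi_sq_eq]
  calc P₁ ^ 2 * exp (-(r ^ 2 * t)) * (sin (t * √(symbol m θ r)) / √(symbol m θ r)) ^ 2
      ≤ P₁ ^ 2 * 1 * t ^ 2 := by
        gcongr P₁ ^ 2 * ?_ * ?_
        · exact exp_le_one_iff.mpr (by simp only [neg_nonpos]; positivity)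
        · exact sq_sin_mul_sqrt_div_sqrt_le_sq _ _
    _ = P₁ ^ 2 * t ^ 2 := by ring

lemma phi_sq_le_mul_rpow_neg (hm : m ≠ 0) (hθ : 0 ≤ θ) (ht : 0 ≤ t) (hr : 0 < r)
    (hr1 : r ≤ 1) :
    phi m θ P₁ t r ^ 2 ≤ 2 * P₁ ^ 2 / m ^ 2 * r ^ (-(2 * θ)) := by
  have hmr : 0 < m ^ 2 * r ^ (2 * θ) / 2 := by positivity
  have hA : m ^ 2 * r ^ (2 * θ) / 2 ≤ symbol m θ r := by
    linarith [mul_rpow_le_two_mul_symbol m hθ hr.le hr1]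
  rw [phi_sq_eq]
  calc P₁ ^ 2 * exp (-(r ^ 2 * t)) * (sin (t * √(symbol m θ r)) / √(symbol m θ r)) ^ 2
      ≤ P₁ ^ 2 * 1 * (m ^ 2 * r ^ (2 * θ) / 2)⁻¹ := by
        gcongr
        · exact exp_le_one_iff.mpr (by simp only [neg_nonpos]; positivity)
        · exact (sq_sin_mul_sqrt_div_sqrt_le_inv _ (hmr.le.trans hA)).trans (inv_anti₀ hmr hA)
    _ = 2 * P₁ ^ 2 / m ^ 2 * r ^ (-(2 * θ)) := by
        rw [rpow_neg hr.le]
        field_simp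

lemma mul_sq_le_phi_sq (hθ : θ ≤ 1) (ht : 1 ≤ t) (hr : 0 < r) (hr1 : r ≤ 1)
    (h : (1 + m ^ 2) * r ^ (2 * θ) * t ^ 2 ≤ 1) :
    P₁ ^ 2 * exp (-1) * (2 / π * t) ^ 2 ≤ phi m θ P₁ t r ^ 2 := by
  have hA : t ^ 2 * symbol m θ r ≤ 1 := by
    nlinarith [symbol_le m hθ hr hr1, sq_nonneg t]
  have hrt : r ^ 2 * t ≤ 1 := by
    nlinarith [sq_le_symbol (θ := θ) m hr.le, sq_nonneg r]
  rw [phi_sq_eq]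
  gcongr P₁ ^ 2 * exp ?_ * ?_
  · linarith
  · exact sq_two_div_pi_mul_le_sq_sin_mul_sqrt_div_sqrt (by linarith)
      (lt_of_lt_of_le (by positivity) (sq_le_symbol m hr.le)) hA

end pointwise

lemma rpow_neg_inv_mul_sq {t θ : ℝ} (ht : 0 < t) (hθ : θ ≠ 0) :
    t ^ (-θ⁻¹) * t ^ 2 = t ^ ((2 * θ - 1) / θ) := by
  rw [← rpow_two, ← rpow_add ht]
  congr 1
  field_simp
  ring

lemma rpow_neg_inv_rpow_one_sub_two_mul {t θ : ℝ} (ht : 0 < t) (hθ : θ ≠ 0) :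
    (t ^ (-θ⁻¹)) ^ (1 - 2 * θ) = t ^ ((2 * θ - 1) / θ) := by
  rw [← rpow_mul ht.le]
  congr 1
  field_simp
  ring

section integral

variable {m θ P₁ t : ℝ}

lemma intervalIntegrable_phi_sq (ht : 0 ≤ t) (a b : ℝ) :
    IntervalIntegrable (fun r => phi m θ P₁ t r ^ 2) volume a b :=
  (intervalIntegrable_const (c := P₁ ^ 2 * t ^ 2)).mono_fun'
    ((measurable_phi m θ P₁ t).pow_const 2).aestronglyMeasurable
    (ae_of_all _ fun _ => (norm_of_nonneg (sq_nonneg _)).trans_le (phi_sq_le_sq_mul_sq ht))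

lemma integral_phi_sq_le (hm : m ≠ 0) (hθ : 1 / 2 < θ) (ht : 1 ≤ t) :
    ∫ r in (0)..1, phi m θ P₁ t r ^ 2 ≤
      (1 + 2 / (m ^ 2 * (2 * θ - 1))) * P₁ ^ 2 * t ^ ((2 * θ - 1) / θ) := by
  have ht0 : 0 < t := by linarith
  have hθ0 : 0 < θ := by linarith
  set a := t ^ (-θ⁻¹)
  have ha : 0 < a := rpow_pos_of_pos ht0 _
  have ha1 : a ≤ 1 := rpow_le_one_of_one_le_of_nonpos ht (neg_nonpos.mpr (inv_nonneg.mpr hθ0.le))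
  have hnear : ∫ r in (0)..a, phi m θ P₁ t r ^ 2 ≤ a * (P₁ ^ 2 * t ^ 2) := by
    calc ∫ r in (0)..a, phi m θ P₁ t r ^ 2 ≤ ∫ _ in (0)..a, P₁ ^ 2 * t ^ 2 :=
          intervalIntegral.integral_mono_on ha.le (intervalIntegrable_phi_sq ht0.le _ _)
            intervalIntegrable_const fun _ _ => phi_sq_le_sq_mul_sq ht0.le
      _ = a * (P₁ ^ 2 * t ^ 2) := by rw [intervalIntegral.integral_const, sub_zero, smul_eq_mul]
  have hfar : ∫ r in a..1, phi m θ P₁ t r ^ 2 ≤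
      2 * P₁ ^ 2 / m ^ 2 * (a ^ (1 - 2 * θ) / (2 * θ - 1)) := by
    calc ∫ r in a..1, phi m θ P₁ t r ^ 2
        ≤ ∫ r in a..1, 2 * P₁ ^ 2 / m ^ 2 * r ^ (-(2 * θ)) :=
          intervalIntegral.integral_mono_on ha1 (intervalIntegrable_phi_sq ht0.le _ _)
            ((intervalIntegral.intervalIntegrable_rpow
              (Or.inr (by rw [uIcc_of_le ha1]; exact fun h => ha.not_ge h.1))).const_mul _)
            fun r hr => phi_sq_le_mul_rpow_neg hm (by linarith) ht0.le (ha.trans_le hr.1) hr.2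
      _ ≤ 2 * P₁ ^ 2 / m ^ 2 * (a ^ (1 - 2 * θ) / (2 * θ - 1)) := by
          rw [intervalIntegral.integral_const_mul]
          gcongr
          exact integral_rpow_neg_le (by linarith) ha ha1
  rw [← intervalIntegral.integral_add_adjacent_intervals (intervalIntegrable_phi_sq ht0.le _ _)
    (intervalIntegrable_phi_sq ht0.le _ _)]
  have hpow : a * (P₁ ^ 2 * t ^ 2) + 2 * P₁ ^ 2 / m ^ 2 * (a ^ (1 - 2 * θ) / (2 * θ - 1)) =
      (1 + 2 / (m ^ 2 * (2 * θ - 1))) * P₁ ^ 2 * t ^ ((2 * θ - 1) / θ) := by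
    have h1 : a * t ^ 2 = t ^ ((2 * θ - 1) / θ) := rpow_neg_inv_mul_sq ht0 hθ0.ne'
    rw [rpow_neg_inv_rpow_one_sub_two_mul ht0 hθ0.ne', ← h1]
    have : 2 * θ - 1 ≠ 0 := (sub_pos.mpr (by linarith)).ne'
    field_simp
  exact (add_le_add hnear hfar).trans_eq hpow

lemma le_integral_phi_sq (hθ0 : 0 < θ) (hθ : θ ≤ 1) (ht : 1 ≤ t) :
    P₁ ^ 2 * exp (-1) * (2 / π) ^ 2 * (1 + m ^ 2) ^ (-(2 * θ)⁻¹) * t ^ ((2 * θ - 1) / θ) ≤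
      ∫ r in (0)..1, phi m θ P₁ t r ^ 2 := by
  have ht0 : 0 < t := by linarith
  have hm1 : 1 ≤ 1 + m ^ 2 := by nlinarith [sq_nonneg m]
  set δ := (1 + m ^ 2) ^ (-(2 * θ)⁻¹) * t ^ (-θ⁻¹)
  have hδ : 0 < δ := by positivity
  have hδ1 : δ ≤ 1 := mul_le_one₀
    (rpow_le_one_of_one_le_of_nonpos hm1 (neg_nonpos.mpr (inv_nonneg.mpr (by positivity))))
    (by positivity) (rpow_le_one_of_one_le_of_nonpos ht (neg_nonpos.mpr (inv_nonneg.mpr hθ0.le)))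
  have hδθ : (1 + m ^ 2) * δ ^ (2 * θ) * t ^ 2 = 1 := by
    have e1 : -(2 * θ)⁻¹ * (2 * θ) = -1 := by field_simp
    have e2 : -θ⁻¹ * (2 * θ) = -2 := by field_simp
    rw [mul_rpow (by positivity) (by positivity), ← rpow_mul (by positivity),
      ← rpow_mul ht0.le, e1, e2, rpow_neg_one, rpow_neg ht0.le, rpow_two]
    field_simp
  have hsmall : ∀ r ∈ Ioo 0 δ, (1 + m ^ 2) * r ^ (2 * θ) * t ^ 2 ≤ 1 := fun r ⟨hr0, hrδ⟩ =>
    le_of_le_of_eq (by gcongr) hδθ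
  have hnear : δ * (P₁ ^ 2 * exp (-1) * (2 / π * t) ^ 2) ≤
      ∫ r in (0)..δ, phi m θ P₁ t r ^ 2 := by
    calc δ * (P₁ ^ 2 * exp (-1) * (2 / π * t) ^ 2)
        = ∫ _ in (0)..δ, P₁ ^ 2 * exp (-1) * (2 / π * t) ^ 2 := by
          rw [intervalIntegral.integral_const, sub_zero, smul_eq_mul]
      _ ≤ ∫ r in (0)..δ, phi m θ P₁ t r ^ 2 :=
          intervalIntegral.integral_mono_on_of_le_Ioo hδ.le intervalIntegrable_const
            (intervalIntegrable_phi_sq ht0.le _ _) fun r hr =>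
              mul_sq_le_phi_sq hθ ht hr.1 (hr.2.le.trans hδ1) (hsmall r hr)
  calc P₁ ^ 2 * exp (-1) * (2 / π) ^ 2 * (1 + m ^ 2) ^ (-(2 * θ)⁻¹) * t ^ ((2 * θ - 1) / θ)
      = δ * (P₁ ^ 2 * exp (-1) * (2 / π * t) ^ 2) := by
        rw [← rpow_neg_inv_mul_sq ht0 hθ0.ne']; ring
    _ ≤ ∫ r in (0)..δ, phi m θ P₁ t r ^ 2 := hnear
    _ ≤ ∫ r in (0)..1, phi m θ P₁ t r ^ 2 :=
        intervalIntegral.integral_mono_interval le_rfl hδ.le hδ1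
          (ae_of_all _ fun r => sq_nonneg _) (intervalIntegrable_phi_sq ht0.le _ _)

end integral

/-- Lemma 6.5: growth of the profile for `n = 1`, `1/2 < θ ≤ 1`. -/
theorem stmt17 (m θ : ℝ) (hm : 0 < m) (hθ1 : 1 / 2 < θ) (hθ2 : θ ≤ 1) :
    ∃ C₁ C₂ t₀ : ℝ, 0 < C₁ ∧ 0 < C₂ ∧ 0 < t₀ ∧
      ∀ t : ℝ, t₀ ≤ t → ∀ P₁ : ℝ,
        C₁ / (1 + m ^ 2) ^ (1 / (2 * θ)) * P₁ ^ 2 * t ^ ((2 * θ - 1) / θ) ≤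
            (∫ ξ in {ξ : ℝ | |ξ| ≤ 1}, (phi m θ P₁ t |ξ|) ^ 2) ∧
          (∫ ξ in {ξ : ℝ | |ξ| ≤ 1}, (phi m θ P₁ t |ξ|) ^ 2) ≤
            C₂ / m ^ 2 * (1 / (2 * θ - 1)) * P₁ ^ 2 * t ^ ((2 * θ - 1) / θ) := by
  have hθ : 0 < 2 * θ - 1 := by linarith
  refine ⟨2 * exp (-1) * (2 / π) ^ 2, 2 * m ^ 2 * (2 * θ - 1) + 4, 1, by positivity,
    by positivity, one_pos, fun t ht P₁ => ?_⟩
  rw [setIntegral_abs_le_eq_two_mul (fun r => phi m θ P₁ t r ^ 2),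
    ← intervalIntegral.integral_of_le zero_le_one]
  constructor
  · calc 2 * exp (-1) * (2 / π) ^ 2 / (1 + m ^ 2) ^ (1 / (2 * θ)) * P₁ ^ 2 * t ^ ((2 * θ - 1) / θ)
        = 2 * (P₁ ^ 2 * exp (-1) * (2 / π) ^ 2 * (1 + m ^ 2) ^ (-(2 * θ)⁻¹) *
            t ^ ((2 * θ - 1) / θ)) := by
          rw [rpow_neg (by positivity), one_div]
          ring
      _ ≤ 2 * ∫ r in (0)..1, phi m θ P₁ t r ^ 2 := by
          gcongr
          exact le_integral_phi_sq (by linarith) hθ2 ht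
  · calc 2 * ∫ r in (0)..1, phi m θ P₁ t r ^ 2
        ≤ 2 * ((1 + 2 / (m ^ 2 * (2 * θ - 1))) * P₁ ^ 2 * t ^ ((2 * θ - 1) / θ)) := by
          gcongr
          exact integral_phi_sq_le hm.ne' hθ1 ht
      _ = (2 * m ^ 2 * (2 * θ - 1) + 4) / m ^ 2 * (1 / (2 * θ - 1)) * P₁ ^ 2 *
            t ^ ((2 * θ - 1) / θ) := by
          field_simp
          ring

end
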